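/- Let h(z) = p(z) - i l q(z) = ∏_{j=1}^n (z - z_j), where p and q are monic real polynomials with deg p = n, deg q ≤ n - 1, l ∈ ℝ, and suppose all zeros z_j of h lie in the open upper half-plane ℂ₊. Then p has exactly s negative zeros, exactly n - s - 1 positive zeros, and a zero at t = 0, if and only if Σ_{j=1}^n Arg z_j = π/2 + π s. -/

import Mathlib

/-- The principal value of the argument in `[-π, π)`. -/
noncomputable def argPV (z : ℂ) : ℝ :=
  if Complex.arg z = Real.pi then -Real.pi else Complex.arg z

/-! For real `t`, `p t` is the real part of `∏ j, (t - z j) = (-1)ⁿ ∏ j, (z j - t)`, and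
`θ t = ∑ j, arg (z j - t)` is a continuous argument of the latter product. As every `z j` lies
in the upper half-plane, each summand increases strictly from `0` to `π`, so `θ` maps `ℝ`
increasingly onto `(0, nπ)`. The zeros of `p` are therefore exactly the `n` points where `θ`
takes the values `π/2 + kπ`, `k < n`, and since `θ 0 = ∑ j, Arg (z j)`, counting those lying left
and right of `0` gives the claim. -/

open Real Polynomial Filter Topology Set

theorem argPV_of_im_pos {w : ℂ} (hw : 0 < w.im) : argPV w = Complex.arg w :=
  if_neg fun h => hw.ne' (Complex.arg_eq_pi_iff.1 h).2

namespace Complex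

variable {w : ℂ}

theorem arg_eq_pi_div_two_sub_arctan (hw : 0 < w.im) :
    arg w = π / 2 - Real.arctan (w.re / w.im) := by
  have hpos : 0 < arg w :=
    (arg_nonneg_iff.2 hw.le).lt_of_ne' fun h => hw.ne' (arg_eq_zero_iff.1 h).2
  have hlt : arg w < π := arg_lt_pi_iff.2 (Or.inr hw.ne')
  have htan : Real.tan (π / 2 - arg w) = w.re / w.im := by
    rw [Real.tan_eq_sin_div_cos, Real.sin_pi_div_two_sub, Real.cos_pi_div_two_sub,
      cos_arg (ne_of_apply_ne im hw.ne'), sin_arg, div_div_div_cancel_right₀]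
    exact norm_ne_zero_iff.2 (ne_of_apply_ne im hw.ne')
  rw [arctan_eq_of_tan_eq htan ⟨by linarith, by linarith⟩]
  ring

theorem re_prod_eq_prod_norm_mul_cos_sum_arg {ι : Type*} (s : Finset ι) (w : ι → ℂ) :
    (∏ j ∈ s, w j).re = (∏ j ∈ s, ‖w j‖) * Real.cos (∑ j ∈ s, arg (w j)) := by
  conv_lhs => rw [← Finset.prod_congr rfl fun j _ => norm_mul_exp_arg_mul_I (w j)]
  rw [Finset.prod_mul_distrib, ← exp_sum, ← Finset.sum_mul, ← ofReal_prod, ← ofReal_sum,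
    re_ofReal_mul, exp_ofReal_mul_I_re]

theorem arg_sub_ofReal (hw : 0 < w.im) (t : ℝ) :
    arg (w - t) = π / 2 - Real.arctan ((w.re - t) / w.im) := by
  rw [arg_eq_pi_div_two_sub_arctan (by simpa using hw)]
  simp

theorem strictMono_arg_sub_ofReal (hw : 0 < w.im) : StrictMono fun t : ℝ => arg (w - t) := by
  intro t t' h
  simp only [arg_sub_ofReal hw]
  gcongr

theorem continuous_arg_sub_ofReal (hw : 0 < w.im) : Continuous fun t : ℝ => arg (w - t) := by
  simp only [arg_sub_ofReal hw]
  fun_prop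

theorem tendsto_arg_sub_ofReal_atBot (hw : 0 < w.im) :
    Tendsto (fun t : ℝ => arg (w - t)) atBot (𝓝 0) := by
  simp only [arg_sub_ofReal hw]
  have h := (tendsto_atTop_add_const_left _ w.re tendsto_neg_atBot_atTop).atTop_div_const hw
  have := tendsto_const_nhds (x := π / 2) |>.sub <|
    (tendsto_nhds_of_tendsto_nhdsWithin tendsto_arctan_atTop).comp h
  simpa [sub_eq_add_neg] using this

theorem tendsto_arg_sub_ofReal_atTop (hw : 0 < w.im) :
    Tendsto (fun t : ℝ => arg (w - t)) atTop (𝓝 π) := by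
  simp only [arg_sub_ofReal hw]
  have h := (tendsto_atBot_add_const_left _ w.re tendsto_neg_atTop_atBot).atBot_div_const hw
  have := tendsto_const_nhds (x := π / 2) |>.sub <|
    (tendsto_nhds_of_tendsto_nhdsWithin tendsto_arctan_atBot).comp h
  simpa [sub_eq_add_neg] using this

end Complex

theorem Polynomial.eval_eq_re_eval_of_map_sub {p q : ℝ[X]} {c : ℝ} {f : ℂ[X]}
    (h : p.map (algebraMap ℝ ℂ) - C (Complex.I * c) * q.map (algebraMap ℝ ℂ) = f) (t : ℝ) :
    p.eval t = (f.eval (t : ℂ)).re := by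
  subst h
  have hev (r : ℝ[X]) : (r.map (algebraMap ℝ ℂ)).eval (t : ℂ) = r.eval t :=
    (eval_map_algebraMap r _).trans (aeval_algebraMap_apply_eq_algebraMap_eval t r)
  simp [hev]

section Phase

variable {ι : Type*} [Fintype ι] {z : ι → ℂ}

/-- A continuous branch of `arg (∏ j, (z j - t))` when every `z j` lies in the upper half-plane. -/
noncomputable def phase (z : ι → ℂ) (t : ℝ) : ℝ :=
  ∑ j, Complex.arg (z j - t)

theorem phase_mem_Icc (hz : ∀ j, 0 < (z j).im) (t : ℝ) :
    phase z t ∈ Icc 0 (Fintype.card ι * π) := by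
  have hmem (j : ι) : Complex.arg (z j - t) ∈ Icc 0 π :=
    ⟨Complex.arg_nonneg_iff.2 (by simpa using (hz j).le), Complex.arg_le_pi _⟩
  constructor
  · exact Finset.sum_nonneg fun j _ => (hmem j).1
  · simpa [phase] using Finset.sum_le_sum fun j (_ : j ∈ Finset.univ) => (hmem j).2

theorem strictMono_phase [Nonempty ι] (hz : ∀ j, 0 < (z j).im) : StrictMono (phase z) :=
  fun _ _ h => Finset.sum_lt_sum_of_nonempty Finset.univ_nonempty fun j _ =>
    Complex.strictMono_arg_sub_ofReal (hz j) h

theorem continuous_phase (hz : ∀ j, 0 < (z j).im) : Continuous (phase z) :=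
  continuous_finsetSum _ fun j _ => Complex.continuous_arg_sub_ofReal (hz j)

theorem Ioo_subset_range_phase (hz : ∀ j, 0 < (z j).im) :
    Ioo 0 (Fintype.card ι * π) ⊆ range (phase z) := by
  rintro y ⟨hy0, hyπ⟩
  have hbot : Tendsto (phase z) atBot (𝓝 (∑ _ : ι, 0)) :=
    tendsto_finsetSum _ fun j _ => Complex.tendsto_arg_sub_ofReal_atBot (hz j)
  have htop : Tendsto (phase z) atTop (𝓝 (∑ _ : ι, π)) :=
    tendsto_finsetSum _ fun j _ => Complex.tendsto_arg_sub_ofReal_atTop (hz j)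
  rw [Finset.sum_const_zero] at hbot
  rw [Finset.sum_const, Finset.card_univ, nsmul_eq_mul] at htop
  exact mem_range_of_exists_le_of_exists_ge (continuous_phase hz)
    ((hbot.eventually (eventually_lt_nhds hy0)).exists.imp fun _ => le_of_lt)
    ((htop.eventually (eventually_gt_nhds hyπ)).exists.imp fun _ => le_of_lt)

theorem re_prod_ofReal_sub_eq_zero_iff (hz : ∀ j, 0 < (z j).im) (t : ℝ) :
    (∏ j, ((t : ℂ) - z j)).re = 0 ↔ Real.cos (phase z t) = 0 := by
  have hnorm : 0 < ∏ j, ‖z j - t‖ := Finset.prod_pos fun j _ =>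
    norm_pos_iff.2 (ne_of_apply_ne Complex.im (by simpa using (hz j).ne'))
  rw [Finset.prod_congr rfl fun j _ => (neg_sub (z j) t).symm, Finset.prod_neg,
    ← Complex.ofReal_one, ← Complex.ofReal_neg, ← Complex.ofReal_pow,
    Complex.re_ofReal_mul, Complex.re_prod_eq_prod_norm_mul_cos_sum_arg]
  simp [phase, hnorm.ne']

end Phase

theorem Real.cos_eq_zero_iff_of_mem_Icc {x : ℝ} {n : ℕ} (hx : x ∈ Icc 0 (n * π)) :
    cos x = 0 ↔ ∃ k < n, x = π / 2 + π * k := by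
  rw [Real.cos_eq_zero_iff]
  constructor
  · rintro ⟨m, rfl⟩
    have h₀ : (0 : ℝ) ≤ 2 * m + 1 := by nlinarith [pi_pos, hx.1]
    have h₁ : (2 * m + 1 : ℝ) ≤ 2 * n := by nlinarith [pi_pos, hx.2]
    have hm : 0 ≤ m := by
      have : (0 : ℤ) ≤ 2 * m + 1 := by exact_mod_cast h₀
      omega
    lift m to ℕ using hm
    push_cast at h₁ ⊢
    exact ⟨m, by exact_mod_cast (by linarith : (m : ℝ) < n), by ring⟩
  · rintro ⟨k, -, rfl⟩
    exact ⟨k, by push_cast; ring⟩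

theorem Polynomial.roots_map_eq_range_map {R α : Type*} [CommRing R] [IsDomain R]
    {p : R[X]} {n : ℕ} {θ : R → α} {c : ℕ → α} (hp : p ≠ 0) (hdeg : p.natDegree ≤ n)
    (hc : Function.Injective c) (h : ∀ k < n, ∃ t, p.IsRoot t ∧ θ t = c k) :
    p.roots.map θ = (Multiset.range n).map c := by
  classical
  refine (Multiset.eq_of_le_of_card_le ?_ ?_).symm
  · rw [Multiset.le_iff_subset ((Multiset.nodup_range n).map hc)]
    intro y hy
    obtain ⟨k, hk, rfl⟩ := Multiset.mem_map.1 hy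
    obtain ⟨t, ht, htk⟩ := h k (Multiset.mem_range.1 hk)
    exact htk ▸ Multiset.mem_map_of_mem θ ((mem_roots hp).2 ht)
  · simpa using p.card_roots'.trans hdeg

namespace Multiset

variable {α β γ : Type*}

theorem card_filter_comp_eq_of_map_eq {s : Multiset α} {t : Multiset γ} {θ : α → β}
    {c : γ → β} (h : s.map θ = t.map c) (q : β → Prop) [DecidablePred q] :
    (s.filter (q ∘ θ)).card = (t.filter (q ∘ c)).card := by
  rw [← card_map θ, ← filter_map, h, filter_map, card_map]

variable [LinearOrder α] [LinearOrder β] [LinearOrder γ] {s : Multiset α} {t : Multiset γ}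
  {θ : α → β} {c : γ → β} {a : α} {b : γ}

theorem card_filter_lt_eq_of_map_eq (hθ : StrictMono θ) (hc : StrictMono c)
    (h : s.map θ = t.map c) (hab : θ a = c b) :
    (s.filter (· < a)).card = (t.filter (· < b)).card := by
  convert card_filter_comp_eq_of_map_eq h (· < θ a) using 2
  · exact filter_congr fun x _ => hθ.lt_iff_lt.symm
  · exact filter_congr fun x _ => by simp [hab, hc.lt_iff_lt]

theorem card_filter_gt_eq_of_map_eq (hθ : StrictMono θ) (hc : StrictMono c)
    (h : s.map θ = t.map c) (hab : θ a = c b) :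
    (s.filter (a < ·)).card = (t.filter (b < ·)).card := by
  convert card_filter_comp_eq_of_map_eq h (θ a < ·) using 2
  · exact filter_congr fun x _ => hθ.lt_iff_lt.symm
  · exact filter_congr fun x _ => by simp [hab, hc.lt_iff_lt]

theorem card_filter_range_lt {n k : ℕ} (hk : k ≤ n) : ((range n).filter (· < k)).card = k := by
  rw [← Finset.range_val, ← Finset.filter_val, Finset.card_val, Finset.range_eq_Ico,
    Finset.Ico_filter_lt, Nat.card_Ico, min_eq_right hk, Nat.sub_zero]

theorem card_filter_range_gt (n k : ℕ) : ((range n).filter (k < ·)).card = n - k - 1 := by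
  rw [← Finset.range_val, ← Finset.filter_val, Finset.card_val]
  simp only [← Nat.add_one_le_iff, Finset.range_eq_Ico, Finset.Ico_filter_le, Nat.card_Ico]
  omega

end Multiset

theorem strictMono_pi_div_two_add_pi_mul : StrictMono fun k : ℕ => π / 2 + π * k :=
  fun _ _ h => by dsimp only; gcongr

section RootsOfRealPart

variable {n : ℕ} {p q : ℝ[X]} {l : ℝ} {z : Fin n → ℂ}
  (hfact : p.map (algebraMap ℝ ℂ) - C (Complex.I * l) * q.map (algebraMap ℝ ℂ) =
    ∏ j, (X - C (z j)))
  (hupper : ∀ j, 0 < (z j).im)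
include hfact hupper

theorem isRoot_iff_exists_phase_eq (t : ℝ) :
    p.IsRoot t ↔ ∃ k < n, phase z t = π / 2 + π * k := by
  rw [IsRoot, eval_eq_re_eval_of_map_sub hfact]
  simp only [eval_prod, eval_sub, eval_X, eval_C]
  rw [re_prod_ofReal_sub_eq_zero_iff hupper,
    cos_eq_zero_iff_of_mem_Icc (by simpa using phase_mem_Icc hupper t)]

theorem roots_map_phase (hp : p ≠ 0) (hpd : p.natDegree ≤ n) :
    p.roots.map (phase z) = (Multiset.range n).map fun k : ℕ => π / 2 + π * k := by
  refine roots_map_eq_range_map hp hpd strictMono_pi_div_two_add_pi_mul.injective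
    fun k hk => ?_
  have hk' : (k : ℝ) + 1 ≤ n := by exact_mod_cast hk
  obtain ⟨t, ht⟩ := Ioo_subset_range_phase hupper (show π / 2 + π * k ∈ Ioo 0 _ by
    rw [Fintype.card_fin]; constructor <;> nlinarith [pi_pos])
  exact ⟨t, (isRoot_iff_exists_phase_eq hfact hupper t).2 ⟨k, hk, ht⟩, ht⟩

theorem card_roots_filter_of_phase_eq (hp : p ≠ 0) (hpd : p.natDegree ≤ n) {k : ℕ}
    (hk : k < n) (h0 : phase z 0 = π / 2 + π * k) :
    (p.roots.filter (· < 0)).card = k ∧ (p.roots.filter (0 < ·)).card = n - k - 1 := by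
  have : Nonempty (Fin n) := ⟨⟨k, hk⟩⟩
  have hroots := roots_map_phase hfact hupper hp hpd
  rw [Multiset.card_filter_lt_eq_of_map_eq (strictMono_phase hupper)
      strictMono_pi_div_two_add_pi_mul hroots h0,
    Multiset.card_filter_gt_eq_of_map_eq (strictMono_phase hupper)
      strictMono_pi_div_two_add_pi_mul hroots h0,
    Multiset.card_filter_range_lt hk.le, Multiset.card_filter_range_gt]
  exact ⟨rfl, rfl⟩

end RootsOfRealPart

theorem zero_root_iff_arg_sum_general (n s : ℕ) (p q : Polynomial ℝ) (l : ℝ)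
    (hp : p.Monic) (hpd : p.natDegree = n)
    (z : Fin n → ℂ)
    (hfact : p.map (algebraMap ℝ ℂ)
        - Polynomial.C (Complex.I * l) * q.map (algebraMap ℝ ℂ)
      = ∏ j, (Polynomial.X - Polynomial.C (z j)))
    (hupper : ∀ j, 0 < (z j).im) :
    ((p.roots.filter (fun x => x < 0)).card = s ∧
     (p.roots.filter (fun x => 0 < x)).card = n - s - 1 ∧
     p.eval 0 = 0)
      ↔ ∑ j, argPV (z j) = Real.pi / 2 + Real.pi * s := by
  have harg : phase z 0 = ∑ j, argPV (z j) := by simp [phase, argPV_of_im_pos (hupper _)]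
  rw [← harg]
  constructor
  · rintro ⟨hneg, -, h0⟩
    obtain ⟨k, hk, hk0⟩ := (isRoot_iff_exists_phase_eq hfact hupper 0).1 h0
    rwa [← hneg, (card_roots_filter_of_phase_eq hfact hupper hp.ne_zero hpd.le hk hk0).1]
  · intro h0
    have hs : s < n := by
      have := (phase_mem_Icc hupper 0).2
      rw [h0, Fintype.card_fin] at this
      exact_mod_cast (by nlinarith [pi_pos] : (s : ℝ) < n)
    obtain ⟨hneg, hpos⟩ := card_roots_filter_of_phase_eq hfact hupper hp.ne_zero hpd.le hs h0
    exact ⟨hneg, hpos, (isRoot_iff_exists_phase_eq hfact hupper 0).2 ⟨s, hs, h0⟩⟩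

/-- Let `h = p - i l q = ∏ⱼ (z - zⱼ)` with `p`, `q` monic real, `deg p = n`,
`deg q ≤ n - 1`, `l ∈ ℝ`, and all zeros `zⱼ` of `h` in the open upper half-plane.
Then `p` has exactly `s` negative zeros, exactly `n - s - 1` positive zeros, and a zero
at `t = 0`, if and only if `∑ⱼ Arg zⱼ = π/2 + π s`. -/
theorem zero_root_iff_arg_sum (n s : ℕ) (p q : Polynomial ℝ) (l : ℝ)
    (hp : p.Monic) (hq : q.Monic) (hpd : p.natDegree = n) (hqd : q.natDegree ≤ n - 1)
    (z : Fin n → ℂ)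
    (hfact : p.map (algebraMap ℝ ℂ)
        - Polynomial.C (Complex.I * l) * q.map (algebraMap ℝ ℂ)
      = ∏ j, (Polynomial.X - Polynomial.C (z j)))
    (hupper : ∀ j, 0 < (z j).im) :
    ((p.roots.filter (fun x => x < 0)).card = s ∧
     (p.roots.filter (fun x => 0 < x)).card = n - s - 1 ∧
     p.eval 0 = 0)
      ↔ ∑ j, argPV (z j) = Real.pi / 2 + Real.pi * s :=
  zero_root_iff_arg_sum_general n s p q l hp hpd z hfact hupper
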